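/- arXiv:2004.03862 — 7 statements merged into one kernel-verified Lean document; each statement's English description precedes it below -/
import Mathlib

section
/- Fix a real number σ with 0 ≤ σ < 1. Then exp(−z)·g(s,k,z) > 0 (equivalently g(s,k,z) > 0) for all z > 0 and all k, s ∈ [−1,1]. -/
noncomputable section

open Real

/-- `F(z) = ((3+σ)/2)·sinh(2z) − (1−σ)·z`. -/
def F (σ z : ℝ) : ℝ := ((3 + σ) / 2) * Real.sinh (2 * z) - (1 - σ) * z

/-- `F̄(z) = ((3+σ)/2)·sinh(2z) + (1−σ)·z`. -/
def Fbar (σ z : ℝ) : ℝ := ((3 + σ) / 2) * Real.sinh (2 * z) + (1 - σ) * z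

/-- `ψ(k,z)`. -/
def psi (σ k z : ℝ) : ℝ :=
  (2 + (1 - σ) * z) * Real.cosh (k * z) * Real.cosh z
    + (-(1 + σ) + (1 - σ) * z) * Real.cosh (k * z) * Real.sinh z
    - (1 - σ) * k * z * Real.sinh (k * z) * Real.cosh z
    - (1 - σ) * k * z * Real.sinh (k * z) * Real.sinh z

/-- `ξ(k,z)`. -/
def xi (σ k z : ℝ) : ℝ :=
  -(1 - σ) * k * z * Real.cosh (k * z) * Real.cosh z
    - (1 - σ) * k * z * Real.cosh (k * z) * Real.sinh z
    + (-(1 + σ) + (1 - σ) * z) * Real.sinh (k * z) * Real.cosh z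
    + (2 + (1 - σ) * z) * Real.sinh (k * z) * Real.sinh z

/-- `ζ(k,z)`. -/
def zeta (σ k z : ℝ) : ℝ :=
  (4 / (1 - σ) - (1 + σ) * z) * Real.cosh (k * z) * Real.cosh z
    + ((1 + σ) ^ 2 / (1 - σ) + 2 * z) * Real.cosh (k * z) * Real.sinh z
    - 2 * k * z * Real.sinh (k * z) * Real.cosh z
    + (1 + σ) * k * z * Real.sinh (k * z) * Real.sinh z

/-- `η(k,z)`. -/
def eta (σ k z : ℝ) : ℝ :=
  (1 + σ) * k * z * Real.cosh (k * z) * Real.cosh z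
    - 2 * k * z * Real.cosh (k * z) * Real.sinh z
    + ((1 + σ) ^ 2 / (1 - σ) + 2 * z) * Real.sinh (k * z) * Real.cosh z
    + (4 / (1 - σ) - (1 + σ) * z) * Real.sinh (k * z) * Real.sinh z

/-- `g(s,k,z)`. -/
def g (σ s k z : ℝ) : ℝ :=
  Real.cosh (s * z) *
      (zeta σ k z / F σ z + z * psi σ k z / F σ z - s * z * xi σ k z / Fbar σ z)
    + Real.sinh (s * z) *
      (eta σ k z / Fbar σ z + z * xi σ k z / Fbar σ z - s * z * psi σ k z / F σ z)

/-- `h(s,k,z) = (1+z·|k−s|)·exp(−z·|k−s|)`. -/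
def hfun (s k z : ℝ) : ℝ := (1 + z * |k - s|) * Real.exp (-(z * |k - s|))

/-- `φ(s,k,z) = exp(−z)·g(s,k,z) + h(s,k,z)`. -/
def phi (σ s k z : ℝ) : ℝ := Real.exp (-z) * g σ s k z + hfun s k z

/-! With `X = e^z`, `Y = e^{kz}`, `S = e^{sz}`, clearing the denominators of `g` turns
`16 (1-σ) F F̄ X³ Y S · g` into a polynomial in `X, Y, S, z, k, s, σ` that can be written as a
sum of products of factors which are nonnegative once `X ≥ 1`, `Y, S ∈ [X⁻¹, X]`, `|k|, |s| ≤ 1`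
and `-3 < σ < 1`, with one summand strictly positive for `z > 0`. Since `F` and `F̄` are positive
for `σ ≥ -1`, `g` is positive. -/

lemma cosh_eq_div_exp (x : ℝ) : cosh x = (exp x ^ 2 + 1) / (2 * exp x) := by
  rw [cosh_eq, exp_neg]
  field_simp

lemma sinh_eq_div_exp (x : ℝ) : sinh x = (exp x ^ 2 - 1) / (2 * exp x) := by
  rw [sinh_eq, exp_neg]
  field_simp

lemma F_pos {σ z : ℝ} (hσ : -1 ≤ σ) (hz : 0 < z) : 0 < F σ z := by
  have h := self_lt_sinh_iff.2 (by positivity : 0 < 2 * z)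
  rw [F]
  nlinarith

lemma Fbar_pos {σ z : ℝ} (hσ₀ : -1 ≤ σ) (hσ₁ : σ ≤ 1) (hz : 0 < z) : 0 < Fbar σ z := by
  have hF : 0 < F σ z := F_pos hσ₀ hz
  have h1σ : 0 ≤ 1 - σ := sub_nonneg.2 hσ₁
  rw [show Fbar σ z = F σ z + 2 * (1 - σ) * z by unfold F Fbar; ring]
  positivity

def gNumerator (σ z k s X Y S : ℝ) : ℝ :=
  (3 + σ) * ((σ + 1) ^ 2 + 4) * (X ^ 4 - 1) * (X ^ 2 * Y ^ 2 * S ^ 2 + X ^ 2)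
  + (3 + σ) * (1 - σ) ^ 2 * z *
      ((2 - k - s) * (X ^ 6 * Y ^ 2 * S ^ 2 + X ^ 2)
        + (2 + k + s) * (X ^ 6 + X ^ 2 * Y ^ 2 * S ^ 2))
  + 2 * (3 + σ) * (1 - σ) ^ 2 * z ^ 2 *
      ((1 - k) * (1 - s) * (X ^ 6 * Y ^ 2 * S ^ 2 - X ^ 2)
        + (1 + k) * (1 + s) * (X ^ 6 - X ^ 2 * Y ^ 2 * S ^ 2))
  + (1 - σ) *
      (Y ^ 2 * ((3 + σ) ^ 2 * ((X ^ 4 - 1) * (z * (2 - k + s)) + (X ^ 4 - 1) + 2 * z)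
          + 2 * (1 - σ) ^ 2 * z * X ^ 4)
        + S ^ 2 * ((3 + σ) ^ 2 * ((X ^ 4 - 1) * (z * (2 + k - s)) + (X ^ 4 - 1) + 2 * z)
          + 2 * (1 - σ) ^ 2 * z * X ^ 4))
  + 4 * (1 - σ) ^ 3 * z ^ 2 * X ^ 4 * ((2 - k + s) * Y ^ 2 + (2 + k - s) * S ^ 2)
  + 8 * (1 - σ) ^ 3 * z ^ 3 * X ^ 4 * ((1 - k) * (1 + s) * Y ^ 2 + (1 + k) * (1 - s) * S ^ 2)

lemma g_mul_F_mul_Fbar (σ s k z : ℝ) (hF : F σ z ≠ 0) (hFbar : Fbar σ z ≠ 0) :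
    g σ s k z * (F σ z * Fbar σ z) =
      cosh (s * z) * (Fbar σ z * (zeta σ k z + z * psi σ k z) - s * z * F σ z * xi σ k z)
        + sinh (s * z) * (F σ z * (eta σ k z + z * xi σ k z) - s * z * Fbar σ z * psi σ k z) := by
  rw [g]
  field_simp

lemma mul_g_eq_gNumerator (σ s k z : ℝ) (hσ : σ ≠ 1) (hF : F σ z ≠ 0)
    (hFbar : Fbar σ z ≠ 0) :
    16 * (1 - σ) * exp z ^ 3 * exp (k * z) * exp (s * z) * (g σ s k z * (F σ z * Fbar σ z)) =
      gNumerator σ z k s (exp z) (exp (k * z)) (exp (s * z)) := by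
  have hσ' : 1 - σ ≠ 0 := sub_ne_zero.2 hσ.symm
  rw [g_mul_F_mul_Fbar σ s k z hF hFbar]
  unfold F Fbar zeta eta psi xi
  rw [sinh_two_mul]
  simp only [cosh_eq_div_exp, sinh_eq_div_exp]
  have := exp_pos z
  have := exp_pos (k * z)
  have := exp_pos (s * z)
  generalize exp z = X at *
  generalize exp (k * z) = Y at *
  generalize exp (s * z) = S at *
  field_simp
  unfold gNumerator
  ring

lemma gNumerator_pos {σ z k s X Y S : ℝ} (hσ₀ : -3 < σ) (hσ₁ : σ < 1) (hz : 0 < z)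
    (hk : k ∈ Set.Icc (-1 : ℝ) 1) (hs : s ∈ Set.Icc (-1 : ℝ) 1) (hX : 1 ≤ X)
    (hY : 0 < Y) (hS : 0 < S) (hYX : Y ≤ X) (hSX : S ≤ X) (hXY : 1 ≤ X * Y) (hXS : 1 ≤ X * S) :
    0 < gNumerator σ z k s X Y S := by
  obtain ⟨hk₀, hk₁⟩ := hk
  obtain ⟨hs₀, hs₁⟩ := hs
  have h3σ : 0 < 3 + σ := by linarith
  have h1σ : 0 < 1 - σ := by linarith
  have hX4 : 0 ≤ X ^ 4 - 1 := sub_nonneg.2 (one_le_pow₀ hX)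
  have hlow : 0 ≤ X ^ 6 * Y ^ 2 * S ^ 2 - X ^ 2 := by
    have : 1 ≤ (X * Y) * (X * S) := one_le_mul_of_one_le_of_one_le hXY hXS
    have : 1 ≤ ((X * Y) * (X * S)) ^ 2 := one_le_pow₀ this
    nlinarith [sq_nonneg X]
  have hup : 0 ≤ X ^ 6 - X ^ 2 * Y ^ 2 * S ^ 2 := by
    have : Y * S ≤ X * X := mul_le_mul hYX hSX hS.le (by linarith)
    have : (Y * S) ^ 2 ≤ (X * X) ^ 2 := pow_le_pow_left₀ (by positivity) this 2
    nlinarith [sq_nonneg X]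
  -- `positivity` takes the signs of these non-atomic factors from the context.
  have : 0 ≤ 2 - k - s := by linarith
  have : 0 ≤ 2 + k + s := by linarith
  have : 0 ≤ 2 - k + s := by linarith
  have : 0 ≤ 2 + k - s := by linarith
  have : 0 ≤ 1 - k := by linarith
  have : 0 ≤ 1 + k := by linarith
  have : 0 ≤ 1 - s := by linarith
  have : 0 ≤ 1 + s := by linarith
  unfold gNumerator
  positivity

/-- For fixed σ ∈ [0,1), exp(−z)·g(s,k,z) > 0 (equivalently g(s,k,z) > 0) for all
z > 0 and all k, s ∈ [−1,1]. -/
theorem exp_mul_g_pos (σ : ℝ) (hσ0 : 0 ≤ σ) (hσ1 : σ < 1) :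
    ∀ z : ℝ, 0 < z → ∀ k ∈ Set.Icc (-1 : ℝ) 1, ∀ s ∈ Set.Icc (-1 : ℝ) 1,
      0 < Real.exp (-z) * g σ s k z := by
  intro z hz k hk s hs
  have hF : 0 < F σ z := F_pos (by linarith) hz
  have hFbar : 0 < Fbar σ z := Fbar_pos (by linarith) hσ1.le hz
  have exp_le (t : ℝ) (ht : t ∈ Set.Icc (-1 : ℝ) 1) : exp (t * z) ≤ exp z :=
    exp_le_exp.2 (by nlinarith [ht.2])
  have one_le (t : ℝ) (ht : t ∈ Set.Icc (-1 : ℝ) 1) : 1 ≤ exp z * exp (t * z) := by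
    rw [← exp_add]
    exact one_le_exp (by nlinarith [ht.1])
  have hN := gNumerator_pos (by linarith) hσ1 hz hk hs (one_le_exp hz.le) (exp_pos _)
    (exp_pos _) (exp_le k hk) (exp_le s hs) (one_le k hk) (one_le s hs)
  rw [← mul_g_eq_gNumerator σ s k z hσ1.ne hF.ne' hFbar.ne'] at hN
  have h1σ : 0 < 1 - σ := sub_pos.2 hσ1
  have hg : 0 < g σ s k z * (F σ z * Fbar σ z) := pos_of_mul_pos_right hN (by positivity)
  exact mul_pos (exp_pos _) (pos_of_mul_pos_left hg (by positivity))
end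
end

section
/- Fix a real number σ with 0 ≤ σ < 1. Then for every z > 0 and every k ∈ [−1,1] one has: (i) ψ(k,z) > 0; (ii) ψ(k,z) + ξ(k,z) = (2+(1−σ)(1−k)z)·cosh((1+k)z) + (−(1+σ)+(1−σ)(1−k)z)·sinh((1+k)z) > 0; and (iii) ψ(k,z) − ξ(k,z) = (2+(1−σ)(1+k)z)·cosh((1−k)z) + (−(1+σ)+(1−σ)(1+k)z)·sinh((1−k)z) > 0. -/
noncomputable section

open Real

/-!
Writing `c = cosh t`, `s = sinh t`, the combination `(2 + (1-σ)w) c + (-(1+σ) + (1-σ)w) s` equals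
`2(c - s) + (1-σ) s + (1-σ) w (c + s) = 2e^{-t} + (1-σ) sinh t + (1-σ) w e^t`, which is positive for
`σ ≤ 1` and `t, w ≥ 0`. By the addition formulas, `ψ + ξ` and `ψ - ξ` are such combinations with
`(w, t) = ((1-k)z, (1+k)z)` and `((1+k)z, (1-k)z)`, and `ψ` is their mean.
-/

lemma cosh_sinh_combination_pos {σ t w : ℝ} (hσ : σ ≤ 1) (ht : 0 ≤ t) (hw : 0 ≤ w) :
    0 < (2 + (1 - σ) * w) * Real.cosh t + (-(1 + σ) + (1 - σ) * w) * Real.sinh t := by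
  have hσ' : 0 ≤ 1 - σ := by linarith
  have hexp : (2 + (1 - σ) * w) * Real.cosh t + (-(1 + σ) + (1 - σ) * w) * Real.sinh t =
      2 * Real.exp (-t) + (1 - σ) * Real.sinh t + (1 - σ) * w * Real.exp t := by
    rw [← Real.cosh_sub_sinh, ← Real.cosh_add_sinh]
    ring
  rw [hexp]
  have := mul_nonneg hσ' (Real.sinh_nonneg_iff.2 ht)
  have := mul_nonneg (mul_nonneg hσ' hw) (Real.exp_pos t).le
  linarith [Real.exp_pos (-t)]

lemma psi_add_xi (σ k z : ℝ) :
    psi σ k z + xi σ k z =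
      (2 + (1 - σ) * (1 - k) * z) * Real.cosh ((1 + k) * z)
        + (-(1 + σ) + (1 - σ) * (1 - k) * z) * Real.sinh ((1 + k) * z) := by
  rw [show (1 + k) * z = z + k * z by ring, Real.cosh_add, Real.sinh_add]
  simp only [psi, xi]
  ring

lemma psi_sub_xi (σ k z : ℝ) :
    psi σ k z - xi σ k z =
      (2 + (1 - σ) * (1 + k) * z) * Real.cosh ((1 - k) * z)
        + (-(1 + σ) + (1 - σ) * (1 + k) * z) * Real.sinh ((1 - k) * z) := by
  rw [show (1 - k) * z = z - k * z by ring, Real.cosh_sub, Real.sinh_sub]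
  simp only [psi, xi]
  ring

section

variable {σ k z : ℝ} (hσ : σ ≤ 1) (hz : 0 ≤ z) (hk : k ∈ Set.Icc (-1 : ℝ) 1)
include hσ hz hk

lemma psi_add_xi_pos : 0 < psi σ k z + xi σ k z := by
  rw [psi_add_xi, mul_assoc (1 - σ)]
  exact cosh_sinh_combination_pos hσ (by nlinarith [hk.1]) (by nlinarith [hk.2])

lemma psi_sub_xi_pos : 0 < psi σ k z - xi σ k z := by
  rw [psi_sub_xi, mul_assoc (1 - σ)]
  exact cosh_sinh_combination_pos hσ (by nlinarith [hk.2]) (by nlinarith [hk.1])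

lemma psi_pos : 0 < psi σ k z := by
  linarith [psi_add_xi_pos hσ hz hk, psi_sub_xi_pos hσ hz hk]

end

theorem psi_pos_and_sum_diff_general (σ : ℝ) (hσ1 : σ < 1) :
    ∀ z : ℝ, 0 < z → ∀ k ∈ Set.Icc (-1 : ℝ) 1,
      0 < psi σ k z ∧
      (psi σ k z + xi σ k z =
        (2 + (1 - σ) * (1 - k) * z) * Real.cosh ((1 + k) * z)
          + (-(1 + σ) + (1 - σ) * (1 - k) * z) * Real.sinh ((1 + k) * z) ∧
        0 < psi σ k z + xi σ k z) ∧
      (psi σ k z - xi σ k z =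
        (2 + (1 - σ) * (1 + k) * z) * Real.cosh ((1 - k) * z)
          + (-(1 + σ) + (1 - σ) * (1 + k) * z) * Real.sinh ((1 - k) * z) ∧
        0 < psi σ k z - xi σ k z) := by
  intro z hz k hk
  exact ⟨psi_pos hσ1.le hz.le hk, ⟨psi_add_xi σ k z, psi_add_xi_pos hσ1.le hz.le hk⟩,
    psi_sub_xi σ k z, psi_sub_xi_pos hσ1.le hz.le hk⟩

/-- For σ ∈ [0,1), z > 0 and k ∈ [−1,1]: ψ(k,z) > 0, and the sums/differences
ψ ± ξ have the stated closed forms and are positive. -/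
theorem psi_pos_and_sum_diff (σ : ℝ) (hσ0 : 0 ≤ σ) (hσ1 : σ < 1) :
    ∀ z : ℝ, 0 < z → ∀ k ∈ Set.Icc (-1 : ℝ) 1,
      0 < psi σ k z ∧
      (psi σ k z + xi σ k z =
        (2 + (1 - σ) * (1 - k) * z) * Real.cosh ((1 + k) * z)
          + (-(1 + σ) + (1 - σ) * (1 - k) * z) * Real.sinh ((1 + k) * z) ∧
        0 < psi σ k z + xi σ k z) ∧
      (psi σ k z - xi σ k z =
        (2 + (1 - σ) * (1 + k) * z) * Real.cosh ((1 - k) * z)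
          + (-(1 + σ) + (1 - σ) * (1 + k) * z) * Real.sinh ((1 - k) * z) ∧
        0 < psi σ k z - xi σ k z) :=
  psi_pos_and_sum_diff_general σ hσ1
end
end

section
/- Fix a real number σ with 0 ≤ σ < 1. Then for every z > 0 one has (2F(z) − F'(z))/F(z)² + (2F̄(z) − F̄'(z))/F̄(z)² < 0 and (2F(z) − F'(z))/F(z)² − (2F̄(z) − F̄'(z))/F̄(z)² < 0, where F'(z) = (3+σ)·cosh(2z) − (1−σ) and F̄'(z) = (3+σ)·cosh(2z) + (1−σ). -/
noncomputable section

open Real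

/-!
With `S = sinh 2z`, `e = exp (-2z)` (so `cosh 2z = S + e`), `X = (3+σ)/2·S`, `Y = (1-σ)z`,
`A = (3+σ)e` and `B = (1-σ)(1-2z)`, one has `F = X - Y`, `F̄ = X + Y`, `2F - F' = B - A` and
`2F̄ - F̄' = -A - B`. Over the common denominator the two numerators are
`2(2XY·B - A(X² + Y²))` and `2(B(X² + Y²) - 2XY·A)`.
The first is negative because `B < A` (from `1 - 2z < e`) and `2XY ≤ X² + Y²`. The second is
trivially negative for `z ≥ 1/2`; for `z < 1/2` it uses `Y ≤ X/3`, so `X² + Y² ≤ 10/9·X²`, and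
reduces to `5(1 - 2z) sinh 2z < 18z·exp (-2z)`, which follows from `exp (-4z) ≥ (1 - 4z/3)³`.
-/

theorem div_sq_sub_add_div_sq_add_neg {A B X Y : ℝ} (hY : 0 ≤ Y) (hYX : Y < X)
    (hBA : B < A) (hA : 0 < A) :
    (B - A) / (X - Y) ^ 2 + (-A - B) / (X + Y) ^ 2 < 0 := by
  have hXY : 0 < X - Y := by linarith
  have hXY' : 0 < X + Y := by linarith
  rw [div_add_div _ _ (by positivity) (by positivity), div_neg_iff]
  refine Or.inr ⟨?_, by positivity⟩
  have hXY0 : 0 ≤ 2 * X * Y := by nlinarith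
  have hpos : 0 < X ^ 2 + Y ^ 2 := by nlinarith
  have hB : 2 * X * Y * B < A * (X ^ 2 + Y ^ 2) := by
    rcases le_or_gt B 0 with hB | hB
    · nlinarith [mul_nonpos_of_nonneg_of_nonpos hXY0 hB]
    · calc 2 * X * Y * B ≤ (X ^ 2 + Y ^ 2) * B := by nlinarith [sq_nonneg (X - Y)]
        _ < A * (X ^ 2 + Y ^ 2) := by nlinarith
  linear_combination 2 * hB

theorem div_sq_sub_sub_div_sq_add_neg {A B X Y : ℝ} (hYX : |Y| < X)
    (h : B * (X ^ 2 + Y ^ 2) < 2 * X * Y * A) :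
    (B - A) / (X - Y) ^ 2 - (-A - B) / (X + Y) ^ 2 < 0 := by
  obtain ⟨hXY', hXY⟩ := abs_lt.mp hYX
  have hXY0 : X - Y ≠ 0 := by linarith
  have hXY0' : X + Y ≠ 0 := by linarith
  rw [div_sub_div _ _ (by positivity) (by positivity), div_neg_iff]
  exact Or.inr ⟨by linear_combination 2 * h, by positivity⟩

theorem two_mul_exp_neg_mul_sinh (x : ℝ) : 2 * exp (-x) * sinh x = 1 - exp (-(2 * x)) := by
  have h : exp (-x) * exp x = 1 := by rw [← exp_add, neg_add_cancel, exp_zero]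
  have h2 : exp (-(2 * x)) = exp (-x) ^ 2 := by rw [← exp_nat_mul]; ring_nf
  rw [sinh_eq, h2]
  linear_combination h

theorem five_mul_one_sub_two_mul_mul_sinh_lt {z : ℝ} (hz : 0 < z) (hz' : z < 1 / 2) :
    5 * (1 - 2 * z) * sinh (2 * z) < 18 * z * exp (-(2 * z)) := by
  have hcube : (1 - 4 * z / 3) ^ 3 ≤ exp (-(2 * (2 * z))) := by
    have := one_sub_div_pow_le_exp_neg (n := 3) (t := 4 * z) (by push_cast; linarith)
    convert this using 2 <;> push_cast <;> ring
  have hpoly : 5 * (1 - 2 * z) * (1 - (1 - 4 * z / 3) ^ 3) < 36 * z * (1 - 4 * z / 3) ^ 3 := by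
    nlinarith [mul_nonneg hz.le (sq_nonneg (1 - 2 * z - 11 / 116)),
      mul_nonneg hz.le (pow_nonneg (by linarith : (0:ℝ) ≤ 1 - 2 * z) 3)]
  have hsq : exp (-(2 * (2 * z))) = exp (-(2 * z)) ^ 2 := by rw [← exp_nat_mul]; ring_nf
  have he := exp_pos (-(2 * z))
  have key := two_mul_exp_neg_mul_sinh (2 * z)
  nlinarith [mul_le_mul_of_nonneg_left hcube (by linarith : (0:ℝ) ≤ 36 * z + 5 * (1 - 2 * z))]

theorem three_mul_lt_sinh {σ z : ℝ} (hσ0 : 0 ≤ σ) (hz : 0 < z) :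
    3 * ((1 - σ) * z) < (3 + σ) / 2 * sinh (2 * z) := by
  have hS : 2 * z < sinh (2 * z) := self_lt_sinh_iff.mpr (by linarith)
  nlinarith

theorem one_sub_two_mul_mul_sq_add_sq_lt {σ z : ℝ} (hσ0 : 0 ≤ σ) (hσ1 : σ < 1)
    (hz : 0 < z) :
    (1 - σ) * (1 - 2 * z) * (((3 + σ) / 2 * sinh (2 * z)) ^ 2 + ((1 - σ) * z) ^ 2)
      < 2 * ((3 + σ) / 2 * sinh (2 * z)) * ((1 - σ) * z) * ((3 + σ) * exp (-(2 * z))) := by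
  have hX : 3 * ((1 - σ) * z) < (3 + σ) / 2 * sinh (2 * z) := three_mul_lt_sinh hσ0 hz
  have hY : 0 < (1 - σ) * z := mul_pos (by linarith) hz
  have hXpos : 0 < (3 + σ) / 2 * sinh (2 * z) := by linarith
  rcases le_or_gt (1 / 2) z with hz' | hz'
  · have := exp_pos (-(2 * z))
    have hrhs : 0 < 2 * ((3 + σ) / 2 * sinh (2 * z)) * ((1 - σ) * z) *
        ((3 + σ) * exp (-(2 * z))) := by positivity
    nlinarith [mul_nonneg (mul_nonneg (by linarith : 0 ≤ 1 - σ)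
        (by linarith : (0:ℝ) ≤ 2 * z - 1))
      (add_nonneg (sq_nonneg ((3 + σ) / 2 * sinh (2 * z))) (sq_nonneg ((1 - σ) * z)))]
  · have hXY : ((3 + σ) / 2 * sinh (2 * z)) ^ 2 + ((1 - σ) * z) ^ 2
        ≤ 10 / 9 * ((3 + σ) / 2 * sinh (2 * z)) ^ 2 := by nlinarith
    have hc : 0 < (1 - σ) * (3 + σ) / 9 * ((3 + σ) / 2 * sinh (2 * z)) := by
      have : 0 < 1 - σ := by linarith
      positivity
    calc (1 - σ) * (1 - 2 * z) * (((3 + σ) / 2 * sinh (2 * z)) ^ 2 + ((1 - σ) * z) ^ 2)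
        ≤ (1 - σ) * (1 - 2 * z) * (10 / 9 * ((3 + σ) / 2 * sinh (2 * z)) ^ 2) := by
          gcongr; nlinarith
      _ = (1 - σ) * (3 + σ) / 9 * ((3 + σ) / 2 * sinh (2 * z)) *
            (5 * (1 - 2 * z) * sinh (2 * z)) := by ring
      _ < (1 - σ) * (3 + σ) / 9 * ((3 + σ) / 2 * sinh (2 * z)) * (18 * z * exp (-(2 * z))) :=
          mul_lt_mul_of_pos_left (five_mul_one_sub_two_mul_mul_sinh_lt hz hz') hc
      _ = _ := by ring

/-- Lemma 6.1: for σ ∈ [0,1) and z > 0,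
(2F − F')/F² ± (2F̄ − F̄')/F̄² < 0, where F' and F̄' are the derivatives of F, F̄. -/
theorem AF_F1 (σ : ℝ) (hσ0 : 0 ≤ σ) (hσ1 : σ < 1) :
    ∀ z : ℝ, 0 < z →
      (2 * F σ z - ((3 + σ) * Real.cosh (2 * z) - (1 - σ))) / (F σ z) ^ 2
          + (2 * Fbar σ z - ((3 + σ) * Real.cosh (2 * z) + (1 - σ))) / (Fbar σ z) ^ 2
        < 0 ∧
      (2 * F σ z - ((3 + σ) * Real.cosh (2 * z) - (1 - σ))) / (F σ z) ^ 2
          - (2 * Fbar σ z - ((3 + σ) * Real.cosh (2 * z) + (1 - σ))) / (Fbar σ z) ^ 2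
        < 0 := by
  intro z hz
  have hY : 0 ≤ (1 - σ) * z := mul_nonneg (by linarith) hz.le
  have hYX : (1 - σ) * z < (3 + σ) / 2 * sinh (2 * z) := by linarith [three_mul_lt_sinh hσ0 hz]
  have hBA : (1 - σ) * (1 - 2 * z) < (3 + σ) * exp (-(2 * z)) := by
    nlinarith [add_one_lt_exp (x := -(2 * z)) (by linarith), exp_pos (-(2 * z))]
  have hC : cosh (2 * z) = sinh (2 * z) + exp (-(2 * z)) := by linarith [cosh_sub_sinh (2 * z)]
  have hnum : 2 * F σ z - ((3 + σ) * cosh (2 * z) - (1 - σ))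
      = (1 - σ) * (1 - 2 * z) - (3 + σ) * exp (-(2 * z)) := by
    rw [hC]; unfold F; ring
  have hnum' : 2 * Fbar σ z - ((3 + σ) * cosh (2 * z) + (1 - σ))
      = -((3 + σ) * exp (-(2 * z))) - (1 - σ) * (1 - 2 * z) := by
    rw [hC]; unfold Fbar; ring
  rw [hnum, hnum', F, Fbar]
  exact ⟨div_sq_sub_add_div_sq_add_neg hY hYX hBA (by positivity),
    div_sq_sub_sub_div_sq_add_neg (by rwa [abs_of_nonneg hY])
      (one_sub_two_mul_mul_sq_add_sq_lt hσ0 hσ1 hz)⟩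
end
end

section
/- Let N ≥ 3 be an integer and let m be an integer with 3 ≤ m ≤ N. Then for all real numbers ρ, x with 0 < ρ < π/(N+1) and 0 < x < π/(N+1) one has sin(m·ρ)·sin(m·x)/m³ − sin((m+1)·ρ)·sin((m+1)·x)/(m+1)³ > sin(ρ)·sin(x)·(1/m^{3/2} − 1/(m+1)^{3/2})². -/
open Real

/-! With `s_k = sin (k ρ) sin (k x)`: since `sin t / t` is strictly decreasing on `(0, π]` (concavity
of `sin`), `s_{m+1} / (m+1)² < s_m / m²`, so the right-hand side exceeds
`s_m / m³ - s_m / (m² (m+1)) = s_m / (m³ (m+1))`. Moreover `sin ρ sin x ≤ s_m` because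
`ρ ≤ m ρ ≤ π - ρ`, and with `p = √m`, `q = √(m+1)` the bound
`(m^{-3/2} - (m+1)^{-3/2})² < 1 / (m³ (m+1))` reduces to `q³ - p³ < q²`, which follows from
`(q - p) (q + p) = 1`. -/

theorem sin_div_lt_sin_div {a b : ℝ} (ha : 0 < a) (hab : a < b) (hb : b ≤ π) :
    sin b / b < sin a / a := by
  have h0 : (0 : ℝ) ∈ Set.Icc 0 π := ⟨le_rfl, pi_pos.le⟩
  simpa using strictConcaveOn_sin_Icc.secant_strict_mono h0 ⟨ha.le, hab.le.trans hb⟩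
    ⟨(ha.trans hab).le, hb⟩ ha.ne' (ha.trans hab).ne' hab

theorem sin_mul_div_lt_sin_mul_div {s t ρ : ℝ} (hs : 0 < s) (hst : s < t) (hρ : 0 < ρ)
    (htρ : t * ρ ≤ π) : sin (t * ρ) / t < sin (s * ρ) / s := by
  have h := sin_div_lt_sin_div (mul_pos hs hρ) (mul_lt_mul_of_pos_right hst hρ) htρ
  rwa [← div_div, ← div_div, div_lt_div_iff_of_pos_right hρ] at h

theorem sin_le_sin_of_le_of_add_le_pi {a b : ℝ} (ha : 0 ≤ a) (hab : a ≤ b) (h : a + b ≤ π) :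
    sin a ≤ sin b := by
  rcases le_or_gt b (π / 2) with hb | hb
  · exact sin_le_sin_of_le_of_le_pi_div_two (by linarith [pi_pos]) hb hab
  · rw [← sin_pi_sub b]
    exact sin_le_sin_of_le_of_le_pi_div_two (by linarith [pi_pos]) (by linarith) (by linarith)

theorem sin_mul_sin_mul_div_sq_lt {s t ρ x : ℝ} (hs : 0 < s) (hst : s < t) (hρ : 0 < ρ)
    (hx : 0 < x) (htρ : t * ρ ≤ π) (htx : t * x ≤ π) :
    sin (t * ρ) * sin (t * x) / t ^ 2 < sin (s * ρ) * sin (s * x) / s ^ 2 := by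
  have hsin_div_nonneg {y : ℝ} (hy : 0 < y) (hty : t * y ≤ π) : 0 ≤ sin (t * y) / t :=
    div_nonneg (sin_nonneg_of_nonneg_of_le_pi (by nlinarith) hty) (by linarith)
  have h := mul_lt_mul'' (sin_mul_div_lt_sin_mul_div hs hst hρ htρ)
    (sin_mul_div_lt_sin_mul_div hs hst hx htx) (hsin_div_nonneg hρ htρ) (hsin_div_nonneg hx htx)
  rwa [div_mul_div_comm, div_mul_div_comm, ← sq, ← sq] at h

theorem sub_cube_lt_sq {p q : ℝ} (hp : 1 ≤ p) (hq : 0 < q) (hpq : q ^ 2 = p ^ 2 + 1) :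
    q ^ 3 - p ^ 3 < q ^ 2 := by
  have hqp : (q - p) * (q + p) = 1 := by linear_combination hpq
  have hpq' : p < q := by nlinarith
  have h : q ^ 2 + p * q + p ^ 2 < q ^ 2 * (q + p) := by nlinarith
  calc q ^ 3 - p ^ 3 = (q - p) * (q ^ 2 + p * q + p ^ 2) := by ring
    _ < (q - p) * (q ^ 2 * (q + p)) := mul_lt_mul_of_pos_left h (by linarith)
    _ = q ^ 2 := by linear_combination q ^ 2 * hqp

theorem rpow_three_halves {M : ℝ} (hM : 0 ≤ M) : M ^ ((3 : ℝ) / 2) = √M ^ 3 := by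
  rw [rpow_div_two_eq_sqrt 3 hM]
  norm_cast

theorem inv_rpow_three_halves_sub_sq_lt {M : ℝ} (hM : 1 ≤ M) :
    (1 / M ^ ((3 : ℝ) / 2) - 1 / (M + 1) ^ ((3 : ℝ) / 2)) ^ 2 < 1 / (M ^ 3 * (M + 1)) := by
  set p := √M
  set q := √(M + 1)
  have hp2 : p ^ 2 = M := sq_sqrt (by linarith)
  have hq2 : q ^ 2 = M + 1 := sq_sqrt (by linarith)
  have hp : 1 ≤ p := one_le_sqrt.mpr hM
  have hq : 0 < q := sqrt_pos.mpr (by linarith)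
  have h := sub_cube_lt_sq hp hq (by rw [hp2, hq2])
  have hpq : p ≤ q := sqrt_le_sqrt (by linarith)
  rw [rpow_three_halves (by linarith), rpow_three_halves (by linarith),
    show M ^ 3 * (M + 1) = (p ^ 2) ^ 3 * q ^ 2 by rw [hp2, hq2]]
  calc (1 / p ^ 3 - 1 / q ^ 3) ^ 2 = (q ^ 3 - p ^ 3) ^ 2 / (p ^ 3 * q ^ 3) ^ 2 := by
        field_simp
    _ < (q ^ 2) ^ 2 / (p ^ 3 * q ^ 3) ^ 2 := by
        gcongr
        exact sub_nonneg.mpr (by gcongr)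
    _ = 1 / ((p ^ 2) ^ 3 * q ^ 2) := by
        field_simp

theorem sin_diff_quotient_gt_general (N m : ℕ) (hm3 : 3 ≤ m) (hmN : m ≤ N)
    (ρ x : ℝ) (hρ0 : 0 < ρ) (hρ : ρ < Real.pi / (N + 1))
    (hx0 : 0 < x) (hx : x < Real.pi / (N + 1)) :
    Real.sin ρ * Real.sin x *
        (1 / (m : ℝ) ^ ((3 : ℝ) / 2) - 1 / ((m : ℝ) + 1) ^ ((3 : ℝ) / 2)) ^ 2 <
      Real.sin (m * ρ) * Real.sin (m * x) / (m : ℝ) ^ 3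
        - Real.sin ((m + 1 : ℕ) * ρ) * Real.sin ((m + 1 : ℕ) * x) / ((m : ℝ) + 1) ^ 3 := by
  push_cast
  have hm : (3 : ℝ) ≤ m := by exact_mod_cast hm3
  have hle_pi {y : ℝ} (hy0 : 0 < y) (hy : y < π / (N + 1)) : ((m : ℝ) + 1) * y ≤ π := by
    calc ((m : ℝ) + 1) * y ≤ (N + 1) * y := by gcongr
      _ ≤ π := ((lt_div_iff₀' (by positivity)).mp hy).le
  have hρπ := hle_pi hρ0 hρ
  have hxπ := hle_pi hx0 hx
  have hsin {y : ℝ} (hy0 : 0 < y) (hyπ : ((m : ℝ) + 1) * y ≤ π) :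
      0 < sin y ∧ sin y ≤ sin (m * y) :=
    ⟨sin_pos_of_pos_of_lt_pi hy0 (by nlinarith),
      sin_le_sin_of_le_of_add_le_pi hy0.le (by nlinarith) (by linarith)⟩
  obtain ⟨hsρ, hsρm⟩ := hsin hρ0 hρπ
  obtain ⟨hsx, hsxm⟩ := hsin hx0 hxπ
  set s := sin (m * ρ) * sin (m * x)
  calc sin ρ * sin x * (1 / (m : ℝ) ^ ((3 : ℝ) / 2) - 1 / ((m : ℝ) + 1) ^ ((3 : ℝ) / 2)) ^ 2
      < sin ρ * sin x * (1 / (m ^ 3 * (m + 1))) :=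
        mul_lt_mul_of_pos_left (inv_rpow_three_halves_sub_sq_lt (by linarith)) (by positivity)
    _ ≤ s * (1 / (m ^ 3 * (m + 1))) := by gcongr; exact mul_le_mul hsρm hsxm hsx.le (by linarith)
    _ = s / m ^ 3 - s / m ^ 2 / (m + 1) := by field_simp; ring
    _ < s / m ^ 3 - sin ((m + 1) * ρ) * sin ((m + 1) * x) / (m + 1) ^ 2 / (m + 1) := by
        gcongr _ - ?_ / _
        exact sin_mul_sin_mul_div_sq_lt (by positivity) (lt_add_one _) hρ0 hx0 hρπ hxπ
    _ = s / m ^ 3 - sin ((m + 1) * ρ) * sin ((m + 1) * x) / (m + 1) ^ 3 := by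
        rw [div_div, ← pow_succ]

/-- Lemma 6.5: for integers 3 ≤ m ≤ N and ρ, x ∈ (0, π/(N+1)),
sin(mρ)sin(mx)/m³ − sin((m+1)ρ)sin((m+1)x)/(m+1)³
  > sin(ρ)sin(x)·(1/m^{3/2} − 1/(m+1)^{3/2})². -/
theorem sin_diff_quotient_gt (N m : ℕ) (hN : 3 ≤ N) (hm3 : 3 ≤ m) (hmN : m ≤ N)
    (ρ x : ℝ) (hρ0 : 0 < ρ) (hρ : ρ < Real.pi / (N + 1))
    (hx0 : 0 < x) (hx : x < Real.pi / (N + 1)) :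
    Real.sin ρ * Real.sin x *
        (1 / (m : ℝ) ^ ((3 : ℝ) / 2) - 1 / ((m : ℝ) + 1) ^ ((3 : ℝ) / 2)) ^ 2 <
      Real.sin (m * ρ) * Real.sin (m * x) / (m : ℝ) ^ 3
        - Real.sin ((m + 1 : ℕ) * ρ) * Real.sin ((m + 1 : ℕ) * x) / ((m : ℝ) + 1) ^ 3 :=
  sin_diff_quotient_gt_general N m hm3 hmN ρ x hρ0 hρ hx0 hx
end

section
/- Let c : ℕ → ℝ be a sequence (indexed from 1) satisfying 0 < c(m+1) < c(m) for every integer m ≥ 1. Then for every x ∈ [π/4, 3π/4] and every ρ ∈ (0, π), the series ∑_{m=1}^∞ (c(m)/m³)·sin(m·ρ)·sin(m·x) converges absolutely and its sum is strictly positive. (This is the abstract form of Proposition 5.1, applied in the paper with c(m) = φ_m(y,w), the Fourier components of the Green function of the partially hinged plate problem, which are positive and strictly decreasing in m by Theorem 2.1.) -/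
/-!
Since `|sin (m ρ)| ≤ m sin ρ` and `c` is positive and decreasing, the `m`-th term is bounded
by `c 1 · sin ρ / m²`. On `[π/4, 3π/4]` the first term `c 1 · sin ρ · sin x` is at least
`c 1 · sin ρ · √2/2`, while the remaining terms have absolute sum at most
`c 1 · sin ρ · (ζ(2) - 1) = c 1 · sin ρ · (π²/6 - 1)`, and `π²/6 - 1 < √2/2`.
-/

open Real

theorem abs_sin_nat_mul_le (n : ℕ) (θ : ℝ) : |sin (n * θ)| ≤ n * |sin θ| := by
  induction n with
  | zero => simp
  | succ n ih =>
    push_cast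
    rw [add_one_mul, sin_add]
    calc |sin (n * θ) * cos θ + cos (n * θ) * sin θ|
        ≤ |sin (n * θ)| * |cos θ| + |cos (n * θ)| * |sin θ| := by
          rw [← abs_mul, ← abs_mul]; exact abs_add_le _ _
      _ ≤ n * |sin θ| * 1 + 1 * |sin θ| := by
          gcongr
          · exact abs_cos_le_one θ
          · exact abs_cos_le_one _
      _ = (n + 1) * |sin θ| := by ring

theorem sqrt_two_div_two_le_sin {x : ℝ} (hx : x ∈ Set.Icc (π / 4) (3 * π / 4)) :
    √2 / 2 ≤ sin x := by
  obtain ⟨hx₁, hx₂⟩ := hx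
  rw [← sin_pi_div_four, ← cos_pi_div_two_sub, ← cos_sub_pi_div_two, ← cos_abs (x - π / 2)]
  apply cos_le_cos_of_nonneg_of_le_pi (abs_nonneg _) (by linarith [pi_pos])
  rw [abs_le]; constructor <;> linarith

theorem hasSum_one_div_nat_add_two_sq :
    HasSum (fun n : ℕ => 1 / ((n : ℝ) + 2) ^ 2) (π ^ 2 / 6 - 1) := by
  have h := (hasSum_nat_add_iff' 2).2 hasSum_zeta_two
  norm_num [Finset.sum_range_succ] at h
  simpa only [one_div, Nat.cast_pow, Nat.cast_add, Nat.cast_ofNat] using h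

theorem pi_sq_div_six_sub_one_lt : π ^ 2 / 6 - 1 < √2 / 2 := by
  have hπ : π < 3.15 := pi_lt_d2
  have h2 : (1.4 : ℝ) < √2 := by rw [lt_sqrt] <;> norm_num
  nlinarith [pi_pos]

theorem tsum_pos_of_tsum_abs_tail_lt {f : ℕ → ℝ} (hf : Summable fun n => |f n|)
    (htail : ∑' n, |f (n + 1)| < f 0) : 0 < ∑' n, f n := by
  have hshift : Summable fun n => |f (n + 1)| := (summable_nat_add_iff 1).2 hf
  have hbound : -∑' n, f (n + 1) ≤ ∑' n, |f (n + 1)| := by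
    rw [← tsum_neg]
    exact hshift.of_abs.neg.tsum_le_tsum (fun n => neg_le_abs _) hshift
  rw [hf.of_abs.tsum_eq_zero_add]
  linarith

theorem abs_div_cube_mul_sin_mul_sin_le (a ρ x : ℝ) (n : ℕ) :
    |a / ((n : ℝ) + 1) ^ 3 * sin (((n : ℝ) + 1) * ρ) * sin (((n : ℝ) + 1) * x)| ≤
      |a| * |sin ρ| / ((n : ℝ) + 1) ^ 2 := by
  have hn : (0 : ℝ) < (n : ℝ) + 1 := by positivity
  have hsin : |sin (((n : ℝ) + 1) * ρ)| ≤ ((n : ℝ) + 1) * |sin ρ| := by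
    exact_mod_cast abs_sin_nat_mul_le (n + 1) ρ
  rw [abs_mul, abs_mul, abs_div, abs_of_pos (pow_pos hn 3)]
  calc |a| / ((n : ℝ) + 1) ^ 3 * |sin (((n : ℝ) + 1) * ρ)| * |sin (((n : ℝ) + 1) * x)|
      ≤ |a| / ((n : ℝ) + 1) ^ 3 * (((n : ℝ) + 1) * |sin ρ|) * 1 := by
        gcongr
        exact abs_sin_le_one _
    _ = |a| * |sin ρ| / ((n : ℝ) + 1) ^ 2 := by field_simp

theorem strictAnti_succ_of_succ_lt {c : ℕ → ℝ} (hc : ∀ m : ℕ, 1 ≤ m → c (m + 1) < c m) :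
    StrictAnti fun n => c (n + 1) :=
  strictAnti_nat_of_succ_lt fun n => hc (n + 1) (Nat.le_add_left 1 n)

theorem summable_abs_and_tsum_pos_of_abs_le_div_sq {f : ℕ → ℝ} {C : ℝ}
    (hf : ∀ n : ℕ, |f n| ≤ C / ((n : ℝ) + 1) ^ 2) (h0 : C * (π ^ 2 / 6 - 1) < f 0) :
    Summable (fun n => |f n|) ∧ 0 < ∑' n, f n := by
  have hζ : Summable fun n : ℕ => 1 / ((n : ℝ) + 1) ^ 2 := by
    exact_mod_cast (summable_nat_add_iff 1).2 hasSum_zeta_two.summable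
  have hsum : Summable fun n => |f n| :=
    .of_nonneg_of_le (fun n => abs_nonneg _) (fun n => (hf n).trans_eq (div_eq_mul_one_div _ _))
      (hζ.mul_left C)
  refine ⟨hsum, tsum_pos_of_tsum_abs_tail_lt hsum ?_⟩
  calc ∑' n, |f (n + 1)|
      ≤ ∑' n : ℕ, C * (1 / ((n : ℝ) + 2) ^ 2) := by
        refine ((summable_nat_add_iff 1).2 hsum).tsum_le_tsum (fun n => ?_)
          (hasSum_one_div_nat_add_two_sq.summable.mul_left C)
        exact (hf (n + 1)).trans_eq (by push_cast; ring)
    _ = C * (π ^ 2 / 6 - 1) := by rw [tsum_mul_left, hasSum_one_div_nat_add_two_sq.tsum_eq]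
    _ < f 0 := h0

/-- Abstract form of Proposition 5.1: if 0 < c(m+1) < c(m) for all m ≥ 1, then
for x ∈ [π/4, 3π/4] and ρ ∈ (0,π) the series ∑_{m≥1} (c(m)/m³)·sin(mρ)·sin(mx)
converges absolutely and has strictly positive sum. -/
theorem green_series_pos_central (c : ℕ → ℝ)
    (hc : ∀ m : ℕ, 1 ≤ m → 0 < c (m + 1) ∧ c (m + 1) < c m)
    (x ρ : ℝ) (hx : x ∈ Set.Icc (Real.pi / 4) (3 * Real.pi / 4))
    (hρ : ρ ∈ Set.Ioo 0 Real.pi) :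
    (Summable fun n : ℕ =>
      |(c (n + 1) / ((n : ℝ) + 1) ^ 3) * Real.sin (((n : ℝ) + 1) * ρ) *
        Real.sin (((n : ℝ) + 1) * x)|) ∧
    0 < ∑' n : ℕ,
      (c (n + 1) / ((n : ℝ) + 1) ^ 3) * Real.sin (((n : ℝ) + 1) * ρ) *
        Real.sin (((n : ℝ) + 1) * x) := by
  have hsinρ : 0 < sin ρ := sin_pos_of_pos_of_lt_pi hρ.1 hρ.2
  have hc_pos (n : ℕ) : 0 < c (n + 1) :=
    (hc (n + 1) (Nat.le_add_left 1 n)).1.trans (hc (n + 1) (Nat.le_add_left 1 n)).2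
  have hc_le (n : ℕ) : c (n + 1) ≤ c 1 :=
    (strictAnti_succ_of_succ_lt fun m hm => (hc m hm).2).antitone (Nat.zero_le n)
  have hC : 0 < c 1 * sin ρ := mul_pos (hc_pos 0) hsinρ
  apply summable_abs_and_tsum_pos_of_abs_le_div_sq (C := c 1 * sin ρ)
  · intro n
    refine (abs_div_cube_mul_sin_mul_sin_le _ _ _ n).trans ?_
    rw [abs_of_pos (hc_pos n), abs_of_pos hsinρ]
    gcongr
    exact hc_le n
  · calc c 1 * sin ρ * (π ^ 2 / 6 - 1)
        < c 1 * sin ρ * (√2 / 2) := mul_lt_mul_of_pos_left pi_sq_div_six_sub_one_lt hC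
      _ ≤ c 1 * sin ρ * sin x := mul_le_mul_of_nonneg_left (sqrt_two_div_two_le_sin hx) hC.le
      _ = _ := by norm_num
end

section
/- Let c : ℕ → ℝ be a sequence (indexed from 1) satisfying 0 < c(m+1) < c(m) for every integer m ≥ 1. Then for all x, ρ ∈ (0, π/4), the series ∑_{m=1}^∞ (c(m)/m³)·sin(m·ρ)·sin(m·x) converges absolutely and its sum is strictly positive. (This is the abstract form of Proposition 5.4, applied in the paper with c(m) = φ_m(y,w), the Fourier components of the Green function of the partially hinged plate problem, which are positive and strictly decreasing in m by Theorem 2.1; it yields positivity of the Green function when both points lie near the same hinged edge.) -/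
/-!
Since `c` is positive and decreasing, Abel summation reduces the positivity of the series to that
of the partial sums `T_k = ∑_{m ≤ k} sin (m ρ) sin (m x) / m³`. As
`sin a sin b = (cos (a - b) - cos (a + b)) / 2`, we have `T_k = (F_k (x - ρ) - F_k (x + ρ)) / 2`
with `F_k t = ∑_{m ≤ k} cos (m t) / m³`, and `F_k` is strictly decreasing on `[0, π/2]`:
its derivative is `-∑_{m ≤ k} sin (m t) / m²`, where, for `N = ⌊π / t⌋`, the terms with `m ≤ N`
are nonnegative and contribute at least `sin t`, while the rest is bounded by
`∑_{m > N} 1 / m² < 1 / N ≤ 2 t / π ≤ sin t`.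
-/

open Real Finset

theorem sum_Ioc_zero_eq_sum_range {M : Type*} [AddCommMonoid M] (f : ℕ → M) (k : ℕ) :
    ∑ m ∈ Ioc 0 k, f m = ∑ n ∈ range k, f (n + 1) := by
  induction k with
  | zero => simp
  | succ k ih => rw [sum_Ioc_succ_top k.zero_le, sum_range_succ, ih]

theorem sin_le_sum_Ioc_sin_mul_div_sq {t : ℝ} (ht : 0 ≤ t) {k : ℕ} (hk : k ≠ 0)
    (hkt : k * t ≤ π) : sin t ≤ ∑ m ∈ Ioc 0 k, sin (m * t) / (m : ℝ) ^ 2 := by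
  have h1 : 1 ∈ Ioc 0 k := mem_Ioc.2 ⟨one_pos, Nat.one_le_iff_ne_zero.2 hk⟩
  refine le_of_eq_of_le (by simp) (single_le_sum (fun m hm => ?_) h1)
  have hm : (m : ℝ) ≤ k := by exact_mod_cast (mem_Ioc.1 hm).2
  exact div_nonneg (sin_nonneg_of_nonneg_of_le_pi (by positivity) (by nlinarith)) (sq_nonneg _)

theorem neg_inv_lt_sum_Ioc_sin_mul_div_sq (t : ℝ) {N k : ℕ} (hN : N ≠ 0) (hNk : N ≤ k) :
    -(N : ℝ)⁻¹ < ∑ m ∈ Ioc N k, sin (m * t) / (m : ℝ) ^ 2 := by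
  have hk : (0 : ℝ) < (k : ℝ)⁻¹ := by
    have : 0 < k := by omega
    positivity
  calc -(N : ℝ)⁻¹ < -((N : ℝ)⁻¹ - (k : ℝ)⁻¹) := by linarith
    _ ≤ -∑ m ∈ Ioc N k, ((m : ℝ) ^ 2)⁻¹ := neg_le_neg (sum_Ioc_inv_sq_le_sub hN hNk)
    _ = ∑ m ∈ Ioc N k, -1 / (m : ℝ) ^ 2 := by simp only [neg_div, one_div, sum_neg_distrib]
    _ ≤ _ := sum_le_sum fun m _ => div_le_div_of_nonneg_right (neg_one_le_sin _) (sq_nonneg _)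

theorem inv_floor_pi_div_le_sin {t : ℝ} (ht0 : 0 < t) (ht : t ≤ π / 2) :
    (⌊π / t⌋₊ : ℝ)⁻¹ ≤ sin t := by
  have hN : π / (2 * t) ≤ ⌊π / t⌋₊ := by
    have h2 : 2 ≤ π / t := by rw [le_div_iff₀ ht0]; linarith
    rw [show π / (2 * t) = π / t / 2 by ring]
    linarith [Nat.lt_floor_add_one (π / t)]
  calc (⌊π / t⌋₊ : ℝ)⁻¹ ≤ (π / (2 * t))⁻¹ := inv_anti₀ (by positivity) hN
    _ = 2 / π * t := by field_simp
    _ ≤ sin t := mul_le_sin ht0.le ht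

theorem sum_Ioc_sin_mul_div_sq_pos {t : ℝ} (ht0 : 0 < t) (ht : t < π / 2) {k : ℕ} (hk : k ≠ 0) :
    0 < ∑ m ∈ Ioc 0 k, sin (m * t) / (m : ℝ) ^ 2 := by
  set N := ⌊π / t⌋₊
  have hNt : N * t ≤ π := (le_div_iff₀ ht0).1 (Nat.floor_le (by positivity))
  have hsin : 0 < sin t := sin_pos_of_pos_of_lt_pi ht0 (by linarith)
  rcases le_or_gt k N with hkN | hNk
  · have hkt : k * t ≤ π := le_trans (by gcongr) hNt
    linarith [sin_le_sum_Ioc_sin_mul_div_sq ht0.le hk hkt]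
  · have hN : N ≠ 0 := (Nat.floor_pos.2 (by rw [le_div_iff₀ ht0]; linarith)).ne'
    rw [← sum_Ioc_consecutive _ N.zero_le hNk.le]
    linarith [sin_le_sum_Ioc_sin_mul_div_sq ht0.le hN hNt,
      neg_inv_lt_sum_Ioc_sin_mul_div_sq t hN hNk.le, inv_floor_pi_div_le_sin ht0 ht.le]

theorem hasDerivAt_sum_Ioc_cos_mul_div_cube (k : ℕ) (t : ℝ) :
    HasDerivAt (fun s => ∑ m ∈ Ioc 0 k, cos (m * s) / (m : ℝ) ^ 3)
      (-∑ m ∈ Ioc 0 k, sin (m * t) / (m : ℝ) ^ 2) t := by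
  rw [← sum_neg_distrib]
  refine HasDerivAt.fun_sum fun m hm => ?_
  have hm0 : (m : ℝ) ≠ 0 := by exact_mod_cast (mem_Ioc.1 hm).1.ne'
  have h := ((hasDerivAt_id t).const_mul (m : ℝ)).cos.div_const ((m : ℝ) ^ 3)
  simp only [id, mul_one] at h
  refine h.congr_deriv ?_
  field_simp

theorem strictAntiOn_sum_Ioc_cos_mul_div_cube {k : ℕ} (hk : k ≠ 0) :
    StrictAntiOn (fun s => ∑ m ∈ Ioc 0 k, cos (m * s) / (m : ℝ) ^ 3) (Set.Icc 0 (π / 2)) := by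
  refine strictAntiOn_of_deriv_neg (convex_Icc _ _)
    (fun s _ => (hasDerivAt_sum_Ioc_cos_mul_div_cube k s).continuousAt.continuousWithinAt)
    fun s hs => ?_
  rw [interior_Icc] at hs
  rw [(hasDerivAt_sum_Ioc_cos_mul_div_cube k s).deriv, neg_lt_zero]
  exact sum_Ioc_sin_mul_div_sq_pos hs.1 hs.2 hk

theorem sum_Ioc_sin_mul_sin_mul_div_cube_pos {x ρ : ℝ} (hx : 0 < x) (hρ : 0 < ρ)
    (hxρ : x + ρ ≤ π / 2) {k : ℕ} (hk : k ≠ 0) :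
    0 < ∑ m ∈ Ioc 0 k, sin (m * ρ) * sin (m * x) / (m : ℝ) ^ 3 := by
  set F := fun s => ∑ m ∈ Ioc 0 k, cos (m * s) / (m : ℝ) ^ 3
  have hF_abs : F |x - ρ| = F (x - ρ) := sum_congr rfl fun m _ => by
    rw [← cos_abs (m * (x - ρ)), abs_mul, Nat.abs_cast]
  have hF_sub : ∑ m ∈ Ioc 0 k, sin (m * ρ) * sin (m * x) / (m : ℝ) ^ 3
      = (F (x - ρ) - F (x + ρ)) / 2 := by
    simp only [F, ← sum_sub_distrib, sum_div]
    refine sum_congr rfl fun m _ => ?_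
    rw [mul_sub, mul_add, cos_sub, cos_add]
    ring
  have hlt : |x - ρ| < x + ρ := abs_sub_lt_iff.2 ⟨by linarith, by linarith⟩
  have := strictAntiOn_sum_Ioc_cos_mul_div_cube hk ⟨abs_nonneg _, by linarith⟩ ⟨by linarith, hxρ⟩ hlt
  rw [hF_sub, ← hF_abs]
  linarith

theorem le_sum_range_mul_of_antitone {a v : ℕ → ℝ} (ha : Antitone a)
    (hv : ∀ k, 0 ≤ ∑ n ∈ range k, v n) {K : ℕ} (hK : K ≠ 0) :
    (a 0 - a 1) * v 0 + a K * ∑ n ∈ range K, v n ≤ ∑ n ∈ range K, a n * v n := by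
  induction K, Nat.one_le_iff_ne_zero.2 hK using Nat.le_induction with
  | base => simp only [sum_range_one]; linarith
  | succ K hK ih =>
    have hstep := mul_le_mul_of_nonneg_right (ha K.le_succ) (hv (K + 1))
    rw [sum_range_succ] at hstep ⊢
    rw [sum_range_succ]
    nlinarith [ih (by omega)]

theorem tsum_mul_pos_of_antitone {a v : ℕ → ℝ} (ha : Antitone a) (ha0 : ∀ n, 0 ≤ a n)
    (ha01 : a 1 < a 0) (hv0 : 0 < v 0) (hv : ∀ k, 0 ≤ ∑ n ∈ range k, v n)
    (hs : Summable fun n => a n * v n) : 0 < ∑' n, a n * v n := by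
  refine (mul_pos (sub_pos.2 ha01) hv0).trans_le (ge_of_tendsto hs.hasSum.tendsto_sum_nat ?_)
  filter_upwards [Filter.eventually_ne_atTop 0] with K hK
  linarith [le_sum_range_mul_of_antitone ha hv hK, mul_nonneg (ha0 K) (hv K)]

theorem summable_abs_mul_sin_mul_sin_div_cube {a : ℕ → ℝ} {C : ℝ} (ha : ∀ n, |a n| ≤ C)
    (x ρ : ℝ) :
    Summable fun n : ℕ => |(a n / ((n : ℝ) + 1) ^ 3) * sin (((n : ℝ) + 1) * ρ) *
      sin (((n : ℝ) + 1) * x)| := by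
  have h3 : Summable fun n : ℕ => C / ((n : ℝ) + 1) ^ 3 := by
    have := (summable_nat_add_iff 1).2 (summable_one_div_nat_pow (p := 3).2 (by norm_num))
    simpa [div_eq_mul_inv] using this.mul_left C
  have hC : 0 ≤ C := (abs_nonneg _).trans (ha 0)
  refine h3.of_norm_bounded fun n => ?_
  rw [Real.norm_eq_abs, abs_abs, abs_mul, abs_mul, abs_div, abs_of_pos (by positivity : (0 : ℝ) < ((n : ℝ) + 1) ^ 3)]
  calc |a n| / ((n : ℝ) + 1) ^ 3 * |sin (((n : ℝ) + 1) * ρ)| * |sin (((n : ℝ) + 1) * x)|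
      ≤ C / ((n : ℝ) + 1) ^ 3 * 1 * 1 := by gcongr <;> first | exact ha n | exact abs_sin_le_one _
    _ = C / ((n : ℝ) + 1) ^ 3 := by ring

/-- Abstract form of Proposition 5.4: if 0 < c(m+1) < c(m) for all m ≥ 1, then
for x, ρ ∈ (0, π/4) the series ∑_{m≥1} (c(m)/m³)·sin(mρ)·sin(mx) converges
absolutely and has strictly positive sum. -/
theorem green_series_pos_same_edge (c : ℕ → ℝ)
    (hc : ∀ m : ℕ, 1 ≤ m → 0 < c (m + 1) ∧ c (m + 1) < c m)
    (x ρ : ℝ) (hx : x ∈ Set.Ioo 0 (Real.pi / 4)) (hρ : ρ ∈ Set.Ioo 0 (Real.pi / 4)) :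
    (Summable fun n : ℕ =>
      |(c (n + 1) / ((n : ℝ) + 1) ^ 3) * Real.sin (((n : ℝ) + 1) * ρ) *
        Real.sin (((n : ℝ) + 1) * x)|) ∧
    0 < ∑' n : ℕ,
      (c (n + 1) / ((n : ℝ) + 1) ^ 3) * Real.sin (((n : ℝ) + 1) * ρ) *
        Real.sin (((n : ℝ) + 1) * x) := by
  obtain ⟨hx0, hx⟩ := hx
  obtain ⟨hρ0, hρ⟩ := hρ
  have hc_anti : Antitone fun n => c (n + 1) :=
    antitone_nat_of_succ_le fun n => (hc (n + 1) (Nat.le_add_left 1 n)).2.le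
  have hc_pos : ∀ n, 0 < c (n + 1) := fun n =>
    (hc (n + 1) (Nat.le_add_left 1 n)).1.trans (hc (n + 1) (Nat.le_add_left 1 n)).2
  have hsum := summable_abs_mul_sin_mul_sin_div_cube
    (fun n => (abs_of_pos (hc_pos n)).trans_le (hc_anti n.zero_le)) x ρ
  refine ⟨hsum, ?_⟩
  set v : ℕ → ℝ := fun n => sin (((n : ℝ) + 1) * ρ) * sin (((n : ℝ) + 1) * x) / ((n : ℝ) + 1) ^ 3
  have hv : ∀ k, 0 ≤ ∑ n ∈ range k, v n := by
    rintro (_ | k)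
    · simp
    · have := sum_Ioc_sin_mul_sin_mul_div_cube_pos hx0 hρ0 (by linarith) k.succ_ne_zero
      rw [sum_Ioc_zero_eq_sum_range] at this
      push_cast at this
      exact this.le
  have hv0 : 0 < v 0 := by
    simp only [v, Nat.cast_zero, zero_add, one_mul, one_pow, div_one]
    exact mul_pos (sin_pos_of_pos_of_lt_pi hρ0 (by linarith)) (sin_pos_of_pos_of_lt_pi hx0 (by linarith))
  have hterm : ∀ n : ℕ, (c (n + 1) / ((n : ℝ) + 1) ^ 3) * sin (((n : ℝ) + 1) * ρ) *
      sin (((n : ℝ) + 1) * x) = c (n + 1) * v n := fun n => by simp only [v]; ring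
  simp only [hterm] at hsum ⊢
  exact tsum_mul_pos_of_antitone hc_anti (fun n => (hc_pos n).le) (hc 1 le_rfl).2 hv0 hv hsum.of_abs
end

section
/- Let c : ℕ → ℝ be a sequence (indexed from 1) satisfying 0 < c(m+1) < c(m) for every integer m ≥ 1. Then for all x, ρ ∈ (0, π/4), the alternating series ∑_{m=1}^∞ (−1)^{m+1}·(c(m)/m³)·sin(m·ρ)·sin(m·x) converges absolutely and its sum is strictly positive. (This is the abstract form of Proposition 5.7, applied in the paper with c(m) = φ_m(y,w), the Fourier components of the Green function of the partially hinged plate problem, which are positive and strictly decreasing in m by Theorem 2.1; it yields positivity of the Green function when the two points lie near opposite hinged edges.) -/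
/-!
With θ₁ = π - (x + ρ) ≤ θ₂ = π - |x - ρ| in [0, π], the product formula gives
(-1)^(m+1) sin(mρ) sin(mx) = (cos(mθ₁) - cos(mθ₂)) / 2. The cosine sums Σ cos(mθ)/m³
decrease on [0, π], since their derivative -Σ sin(mθ)/m² is ≤ 0 there: by Abel summation
this follows from the Fejér–Jackson inequality Σ sin(mθ)/m ≥ 0. So every partial sum of the
series without the weights c(m) is ≥ 0, and Abel summation against the positive decreasing
weights bounds the series below by (c(1) - c(2)) sin ρ sin x > 0.
-/

open Real Finset Set

section AbelSummation

variable {R : Type*} [Ring R] [PartialOrder R] [IsOrderedRing R] {a w : ℕ → R}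

theorem mul_sum_le_sum_mul_of_antitone (ha : Antitone a)
    (hw : ∀ k, 0 ≤ ∑ n ∈ range k, w n) (N : ℕ) :
    a N * ∑ n ∈ range N, w n ≤ ∑ n ∈ range N, a n * w n := by
  induction N with
  | zero => simp
  | succ N ih =>
    rw [sum_range_succ, sum_range_succ]
    calc a (N + 1) * (∑ n ∈ range N, w n + w N)
        ≤ a N * (∑ n ∈ range N, w n + w N) :=
          mul_le_mul_of_nonneg_right (ha N.le_succ) (sum_range_succ w N ▸ hw (N + 1))
      _ = a N * ∑ n ∈ range N, w n + a N * w N := mul_add _ _ _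
      _ ≤ ∑ n ∈ range N, a n * w n + a N * w N := add_le_add_left ih _

theorem sum_mul_nonneg_of_antitone (ha : Antitone a) (ha₀ : ∀ n, 0 ≤ a n)
    (hw : ∀ k, 0 ≤ ∑ n ∈ range k, w n) (N : ℕ) :
    0 ≤ ∑ n ∈ range N, a n * w n :=
  (mul_nonneg (ha₀ N) (hw N)).trans (mul_sum_le_sum_mul_of_antitone ha hw N)

theorem sub_mul_le_sum_mul_of_antitone (ha : Antitone a) (ha₀ : ∀ n, 0 ≤ a n)
    (hw : ∀ k, 0 ≤ ∑ n ∈ range k, w n) {N : ℕ} (hN : 1 ≤ N) :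
    (a 0 - a 1) * w 0 ≤ ∑ n ∈ range N, a n * w n := by
  obtain ⟨N, rfl⟩ := Nat.exists_eq_add_of_le' hN
  -- lowering `a 0` to `a 1` keeps the weights antitone
  have hb : Antitone (a ∘ fun n => max n 1) :=
    ha.comp_monotone fun _ _ h => max_le_max h le_rfl
  have hsplit : ∑ n ∈ range (N + 1), a n * w n
      = (a 0 - a 1) * w 0 + ∑ n ∈ range (N + 1), (a ∘ fun n => max n 1) n * w n := by
    simp only [sum_range_succ', Function.comp, max_eq_right,
      le_add_iff_nonneg_left, zero_le, max_eq_left]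
    noncomm_ring
  rw [hsplit]
  exact le_add_of_nonneg_right (sum_mul_nonneg_of_antitone hb (fun _ => ha₀ _) hw _)

theorem sub_mul_le_tsum_mul_of_antitone [TopologicalSpace R] [ClosedIciTopology R]
    (ha : Antitone a) (ha₀ : ∀ n, 0 ≤ a n) (hw : ∀ k, 0 ≤ ∑ n ∈ range k, w n)
    (hs : Summable fun n => a n * w n) :
    (a 0 - a 1) * w 0 ≤ ∑' n, a n * w n :=
  ge_of_tendsto hs.tendsto_sum_tsum_nat
    (Filter.eventually_atTop.2 ⟨1, fun _ hN => sub_mul_le_sum_mul_of_antitone ha ha₀ hw hN⟩)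

end AbelSummation

theorem nonneg_of_nonneg_at_endpoints_and_critical_points {f f' : ℝ → ℝ} {a b : ℝ}
    (hf : ∀ x, HasDerivAt f (f' x) x) (ha : 0 ≤ f a) (hb : 0 ≤ f b)
    (hcrit : ∀ x ∈ Ioo a b, f' x = 0 → 0 ≤ f x) {x : ℝ} (hx : x ∈ Icc a b) : 0 ≤ f x := by
  obtain ⟨x₀, hx₀, hmin⟩ := isCompact_Icc.exists_isMinOn ⟨x, hx⟩
    fun y _ => (hf y).continuousAt.continuousWithinAt
  refine le_trans ?_ (hmin hx)
  rcases eq_endpoints_or_mem_Ioo_of_mem_Icc hx₀ with rfl | rfl | hx₀'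
  · exact ha
  · exact hb
  · exact hcrit x₀ hx₀'
      ((hmin.isLocalMin (Icc_mem_nhds hx₀'.1 hx₀'.2)).hasDerivAt_eq_zero (hf x₀))

noncomputable def sinSum (p N : ℕ) (θ : ℝ) : ℝ :=
  ∑ m ∈ range N, sin (((m : ℝ) + 1) * θ) / ((m : ℝ) + 1) ^ p

noncomputable def cosSum (p N : ℕ) (θ : ℝ) : ℝ :=
  ∑ m ∈ range N, cos (((m : ℝ) + 1) * θ) / ((m : ℝ) + 1) ^ p

theorem sinSum_zero_right (p N : ℕ) : sinSum p N 0 = 0 := by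
  simp [sinSum]

theorem sinSum_pi (p N : ℕ) : sinSum p N π = 0 :=
  sum_eq_zero fun m _ => by
    rw [show ((m : ℝ) + 1) * π = ((m + 1 : ℕ) : ℝ) * π by push_cast; ring, sin_nat_mul_pi,
      zero_div]

theorem sinSum_succ (p N : ℕ) (θ : ℝ) :
    sinSum p (N + 1) θ = sinSum p N θ + sin (((N : ℝ) + 1) * θ) / ((N : ℝ) + 1) ^ p :=
  sum_range_succ _ _

theorem hasDerivAt_sinSum (p N : ℕ) (θ : ℝ) :
    HasDerivAt (sinSum (p + 1) N) (cosSum p N θ) θ := by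
  refine HasDerivAt.fun_sum fun m _ => ?_
  have hm : ((m : ℝ) + 1) ≠ 0 := by positivity
  refine (((hasDerivAt_id' θ).const_mul ((m : ℝ) + 1)).sin.div_const
    (((m : ℝ) + 1) ^ (p + 1))).congr_deriv ?_
  field_simp
  ring

theorem hasDerivAt_cosSum (p N : ℕ) (θ : ℝ) :
    HasDerivAt (cosSum (p + 1) N) (-sinSum p N θ) θ := by
  rw [sinSum, ← sum_neg_distrib]
  refine HasDerivAt.fun_sum fun m _ => ?_
  have hm : ((m : ℝ) + 1) ≠ 0 := by positivity
  refine (((hasDerivAt_id' θ).const_mul ((m : ℝ) + 1)).cos.div_const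
    (((m : ℝ) + 1) ^ (p + 1))).congr_deriv ?_
  field_simp
  ring

theorem two_mul_sin_half_mul_cosSum_zero (N : ℕ) (θ : ℝ) :
    2 * sin (θ / 2) * cosSum 0 N θ = sin ((2 * N + 1) * (θ / 2)) - sin (θ / 2) := by
  have htele := sum_range_sub (fun m : ℕ => sin ((2 * m + 1) * (θ / 2))) N
  simp only [Nat.cast_zero, mul_zero, zero_add, one_mul] at htele
  rw [cosSum, mul_sum, ← htele]
  refine sum_congr rfl fun m _ => ?_
  rw [pow_zero, div_one, two_mul_sin_mul_cos,
    show θ / 2 - (m + 1) * θ = -((2 * m + 1) * (θ / 2)) by ring, sin_neg]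
  push_cast
  ring_nf

/-- At a critical point of `sinSum 1 N` in `(0, π)` the last term of the sum is nonnegative:
this is the induction step of the Fejér–Jackson inequality `sinSum_one_nonneg`. -/
theorem sin_mul_nonneg_of_cosSum_zero_eq_zero {N : ℕ} {θ : ℝ} (hθ : θ ∈ Ioo 0 π)
    (hcrit : cosSum 0 N θ = 0) : 0 ≤ sin (N * θ) := by
  obtain ⟨hθ₀, hθπ⟩ := hθ
  set s := θ / 2 with hs
  set A := (2 * N + 1) * s
  have hsin : 0 < sin s := sin_pos_of_pos_of_lt_pi (by linarith) (by linarith)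
  have hcos : 0 ≤ cos s := cos_nonneg_of_mem_Icc ⟨by linarith, by linarith⟩
  have hA : sin A = sin s := by
    linarith [two_mul_sin_half_mul_cosSum_zero N θ, mul_eq_zero_of_right (2 * sin s) hcrit]
  have hcosA : cos A ≤ cos s := by
    have habs : |cos A| = |cos s| := (sq_eq_sq_iff_abs_eq_abs _ _).1 (by
      nlinarith [sin_sq_add_cos_sq A, sin_sq_add_cos_sq s])
    calc cos A ≤ |cos A| := le_abs_self _
      _ = cos s := by rw [habs, abs_of_nonneg hcos]
  have hsplit : sin (N * θ) = sin s * (cos s - cos A) := by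
    rw [show (N : ℝ) * θ = A - s by ring, sin_sub, hA]
    ring
  rw [hsplit]
  exact mul_nonneg hsin.le (sub_nonneg.2 hcosA)

theorem sinSum_one_nonneg (N : ℕ) {θ : ℝ} (hθ : θ ∈ Icc 0 π) : 0 ≤ sinSum 1 N θ := by
  induction N generalizing θ with
  | zero => simp [sinSum]
  | succ N ih =>
    refine nonneg_of_nonneg_at_endpoints_and_critical_points (hasDerivAt_sinSum 0 (N + 1))
      (sinSum_zero_right 1 _).ge (sinSum_pi 1 _).ge (fun θ hθ hcrit => ?_) hθ
    have hsin := sin_mul_nonneg_of_cosSum_zero_eq_zero hθ hcrit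
    push_cast at hsin
    rw [sinSum_succ]
    exact add_nonneg (ih (Ioo_subset_Icc_self hθ)) (by positivity)

theorem sinSum_nonneg {p : ℕ} (hp : 1 ≤ p) (N : ℕ) {θ : ℝ} (hθ : θ ∈ Icc 0 π) :
    0 ≤ sinSum p N θ := by
  induction p, hp using Nat.le_induction generalizing N with
  | base => exact sinSum_one_nonneg N hθ
  | succ p hp ih =>
    have hfactor : sinSum (p + 1) N θ
        = ∑ m ∈ range N, 1 / ((m : ℝ) + 1) * (sin (((m : ℝ) + 1) * θ) / ((m : ℝ) + 1) ^ p) :=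
      sum_congr rfl fun m _ => by
        rw [pow_succ]
        field_simp
    have hanti : Antitone fun m : ℕ => 1 / ((m : ℝ) + 1) :=
      antitone_nat_of_succ_le fun m => by
        gcongr
        simp
    rw [hfactor]
    exact sum_mul_nonneg_of_antitone hanti (fun _ => by positivity) (fun k => ih k) N

theorem antitoneOn_cosSum {p : ℕ} (hp : 1 ≤ p) (N : ℕ) :
    AntitoneOn (cosSum (p + 1) N) (Icc 0 π) :=
  antitoneOn_of_hasDerivWithinAt_nonpos (convex_Icc 0 π)
    (fun θ _ => (hasDerivAt_cosSum p N θ).continuousAt.continuousWithinAt)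
    (fun θ _ => (hasDerivAt_cosSum p N θ).hasDerivWithinAt)
    (fun _ hθ => neg_nonpos.2 (sinSum_nonneg hp N (interior_subset hθ)))

theorem neg_one_pow_mul_sin_mul_sin (n : ℕ) (x ρ : ℝ) :
    (-1) ^ n * sin ((n + 1) * ρ) * sin ((n + 1) * x) =
      (cos ((n + 1) * (π - (x + ρ))) - cos ((n + 1) * (π - |x - ρ|))) / 2 := by
  have hcos : ∀ a, cos ((n + 1) * (π - a)) = (-1) ^ (n + 1) * cos ((n + 1) * a) := fun a => by
    rw [← cos_nat_mul_pi_sub]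
    push_cast
    ring_nf
  have habs : cos ((n + 1) * |x - ρ|) = cos ((n + 1) * (x - ρ)) := by
    rw [← cos_abs ((n + 1) * (x - ρ)), abs_mul, abs_of_pos (by positivity : (0 : ℝ) < n + 1)]
  rw [hcos, hcos, habs, mul_add, mul_sub, cos_add, cos_sub, pow_succ]
  ring

theorem sum_neg_one_pow_mul_sin_mul_sin_div_nonneg {p : ℕ} (hp : 2 ≤ p) {x ρ : ℝ}
    (hx : 0 ≤ x) (hρ : 0 ≤ ρ) (hxρ : x + ρ ≤ π) (N : ℕ) :
    0 ≤ ∑ n ∈ range N, (-1) ^ n * sin ((n + 1) * ρ) * sin ((n + 1) * x) / ((n : ℝ) + 1) ^ p := by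
  obtain ⟨p, rfl⟩ : ∃ q, p = q + 1 := ⟨p - 1, by omega⟩
  have hsum : ∑ n ∈ range N,
        (-1) ^ n * sin ((n + 1) * ρ) * sin ((n + 1) * x) / ((n : ℝ) + 1) ^ (p + 1)
      = (cosSum (p + 1) N (π - (x + ρ)) - cosSum (p + 1) N (π - |x - ρ|)) / 2 := by
    rw [cosSum, cosSum, ← sum_sub_distrib, sum_div]
    refine sum_congr rfl fun n _ => ?_
    rw [neg_one_pow_mul_sin_mul_sin]
    ring
  have hd : |x - ρ| ≤ x + ρ := abs_sub_le_iff.2 ⟨by linarith, by linarith⟩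
  have hmono := antitoneOn_cosSum (by omega : 1 ≤ p) N
    (⟨by linarith, by linarith⟩ : π - (x + ρ) ∈ Icc 0 π)
    (⟨by linarith, by linarith [abs_nonneg (x - ρ)]⟩ : π - |x - ρ| ∈ Icc 0 π) (by linarith)
  rw [hsum]
  linarith

theorem abs_neg_one_pow_mul_sin_mul_sin_div_le (n p : ℕ) (x ρ : ℝ) :
    |(-1) ^ n * sin ((n + 1) * ρ) * sin ((n + 1) * x) / ((n : ℝ) + 1) ^ p|
      ≤ 1 / ((n : ℝ) + 1) ^ p := by
  rw [abs_div, abs_mul, abs_mul, abs_pow, abs_neg, abs_one, one_pow, one_mul,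
    abs_of_pos (by positivity : (0 : ℝ) < ((n : ℝ) + 1) ^ p)]
  gcongr
  exact mul_le_one₀ (abs_sin_le_one _) (abs_nonneg _) (abs_sin_le_one _)

theorem summable_one_div_nat_add_one_pow {p : ℕ} (hp : 1 < p) :
    Summable fun n : ℕ => 1 / ((n : ℝ) + 1) ^ p := by
  simpa using (summable_nat_add_iff 1).2 (summable_one_div_nat_pow.2 hp)

/-- Abstract form of Proposition 5.7: if 0 < c(m+1) < c(m) for all m ≥ 1, then
for x, ρ ∈ (0, π/4) the alternating series
∑_{m≥1} (−1)^{m+1}·(c(m)/m³)·sin(mρ)·sin(mx) converges absolutely and has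
strictly positive sum. -/
theorem green_series_pos_opposite_edges (c : ℕ → ℝ)
    (hc : ∀ m : ℕ, 1 ≤ m → 0 < c (m + 1) ∧ c (m + 1) < c m)
    (x ρ : ℝ) (hx : x ∈ Set.Ioo 0 (Real.pi / 4)) (hρ : ρ ∈ Set.Ioo 0 (Real.pi / 4)) :
    (Summable fun n : ℕ =>
      |(-1 : ℝ) ^ ((n + 1) + 1) * (c (n + 1) / ((n : ℝ) + 1) ^ 3) *
        Real.sin (((n : ℝ) + 1) * ρ) * Real.sin (((n : ℝ) + 1) * x)|) ∧
    0 < ∑' n : ℕ,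
      (-1 : ℝ) ^ ((n + 1) + 1) * (c (n + 1) / ((n : ℝ) + 1) ^ 3) *
        Real.sin (((n : ℝ) + 1) * ρ) * Real.sin (((n : ℝ) + 1) * x) := by
  obtain ⟨hx₀, hxπ⟩ := hx
  obtain ⟨hρ₀, hρπ⟩ := hρ
  set w : ℕ → ℝ := fun n =>
    (-1) ^ n * sin ((n + 1) * ρ) * sin ((n + 1) * x) / ((n : ℝ) + 1) ^ 3
  have hterm : ∀ n : ℕ, (-1 : ℝ) ^ ((n + 1) + 1) * (c (n + 1) / ((n : ℝ) + 1) ^ 3) *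
      sin (((n : ℝ) + 1) * ρ) * sin (((n : ℝ) + 1) * x) = c (n + 1) * w n := fun n => by
    simp only [w]
    ring
  have hanti : Antitone fun n => c (n + 1) :=
    antitone_nat_of_succ_le fun n => (hc (n + 1) n.succ_pos).2.le
  have hpos : ∀ n, 0 ≤ c (n + 1)
    | 0 => ((hc 1 le_rfl).1.trans (hc 1 le_rfl).2).le
    | n + 1 => (hc (n + 1) n.succ_pos).1.le
  have habs : Summable fun n => |c (n + 1) * w n| := by
    refine .of_nonneg_of_le (fun _ => abs_nonneg _) (fun n => ?_)
      ((summable_one_div_nat_add_one_pow (p := 3) (by norm_num)).mul_left (c 1))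
    rw [abs_mul, abs_of_nonneg (hpos n)]
    exact mul_le_mul (hanti n.zero_le) (abs_neg_one_pow_mul_sin_mul_sin_div_le n 3 x ρ)
      (abs_nonneg _) (hpos 0)
  have hpartial : ∀ N, 0 ≤ ∑ n ∈ range N, w n :=
    sum_neg_one_pow_mul_sin_mul_sin_div_nonneg (by norm_num) hx₀.le hρ₀.le (by linarith)
  have hw₀ : 0 < w 0 := by
    simpa [w] using mul_pos (sin_pos_of_pos_of_lt_pi hρ₀ (by linarith))
      (sin_pos_of_pos_of_lt_pi hx₀ (by linarith))
  simp only [hterm]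
  refine ⟨habs, ?_⟩
  calc 0 < (c 1 - c 2) * w 0 := mul_pos (sub_pos.2 (hc 1 le_rfl).2) hw₀
    _ ≤ ∑' n, c (n + 1) * w n :=
      sub_mul_le_tsum_mul_of_antitone hanti hpos hpartial habs.of_abs
end
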